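/- Let A be a unital C*-algebra and a₁,…,aₙ,b₁,…,bₘ ∈ A self-adjoint. Then the topological free entropy is subadditive: χ_top(a₁,…,aₙ,b₁,…,bₘ) ≤ χ_top(a₁,…,aₙ : b₁,…,bₘ) + χ_top(b₁,…,bₘ : a₁,…,aₙ) ≤ χ_top(a₁,…,aₙ) + χ_top(b₁,…,bₘ). -/

import Mathlib

open scoped ComplexOrder
open Matrix MeasureTheory Filter
open scoped ENNReal NNReal
noncomputable section

/-! ### Self-adjoint matrices as a real Hilbert space with ⟪A,B⟫ = Re Tr(AB) -/

/-- The space of `k × k` complex matrices. -/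
abbrev Mat (k : ℕ) : Type := Matrix (Fin k) (Fin k) ℂ

/-- The operator norm of a `k × k` complex matrix (the norm of the induced operator on `ℓ²`). -/
def opNorm {k : ℕ} (M : Mat k) : ℝ := ‖Matrix.toEuclideanCLM (𝕜 := ℂ) M‖

/-- Self-adjoint `k × k` complex matrices, as a standalone type. -/
@[ext] structure SA (k : ℕ) : Type where
  val : Mat k
  isSA : star val = val

namespace SA
variable {k : ℕ}

lemma val_injective : Function.Injective (SA.val (k := k)) := by
  rintro ⟨a, _⟩ ⟨b, _⟩ h
  cases h; rfl

instance : Zero (SA k) := ⟨⟨0, star_zero _⟩⟩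
instance : Add (SA k) := ⟨fun A B => ⟨A.val + B.val, by rw [star_add, A.isSA, B.isSA]⟩⟩
instance : Neg (SA k) := ⟨fun A => ⟨-A.val, by rw [star_neg, A.isSA]⟩⟩
instance : Sub (SA k) := ⟨fun A B => ⟨A.val - B.val, by rw [star_sub, A.isSA, B.isSA]⟩⟩
instance : SMul ℕ (SA k) := ⟨fun n A => ⟨n • A.val, by rw [star_nsmul, A.isSA]⟩⟩
instance : SMul ℤ (SA k) := ⟨fun n A => ⟨n • A.val, by rw [star_zsmul, A.isSA]⟩⟩
instance : SMul ℝ (SA k) :=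
  ⟨fun r A => ⟨r • A.val, by rw [star_smul, star_trivial, A.isSA]⟩⟩

instance : AddCommGroup (SA k) :=
  val_injective.addCommGroup SA.val rfl (fun _ _ => rfl) (fun _ => rfl) (fun _ _ => rfl)
    (fun _ _ => rfl) (fun _ _ => rfl)

instance : Module ℝ (SA k) :=
  val_injective.module ℝ
    { toFun := SA.val, map_zero' := rfl, map_add' := fun _ _ => rfl } (fun _ _ => rfl)

lemma trace_sq (A : SA k) :
    Matrix.trace (A.val * A.val) = ((∑ i, ∑ j, Complex.normSq (A.val j i) : ℝ) : ℂ) := by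
  have hA : A.valᴴ = A.val := A.isSA
  rw [show A.val * A.val = A.valᴴ * A.val by rw [hA]]
  push_cast
  simp [Matrix.trace, Matrix.diag, Matrix.mul_apply, Matrix.conjTranspose_apply,
    Complex.star_def, ← Complex.normSq_eq_conj_mul_self]

/-- The real inner product ⟪A,B⟫ = Re Tr(AB) on self-adjoint matrices. -/
def core (k : ℕ) : InnerProductSpace.Core ℝ (SA k) where
  inner A B := (Matrix.trace (A.val * B.val)).re
  conj_inner_symm A B := by simp [Matrix.trace_mul_comm A.val B.val]
  re_inner_nonneg A := by
    show (0:ℝ) ≤ (Matrix.trace (A.val * A.val)).re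
    rw [trace_sq]
    simp only [Complex.ofReal_re]
    exact Finset.sum_nonneg fun i _ => Finset.sum_nonneg fun j _ => Complex.normSq_nonneg _
  definite A := by
    intro h
    have h2 : (Matrix.trace (A.val * A.val)).re = 0 := h
    rw [trace_sq] at h2
    simp only [Complex.ofReal_re] at h2
    have hz := (Finset.sum_eq_zero_iff_of_nonneg (fun i _ => Finset.sum_nonneg
      (fun j _ => Complex.normSq_nonneg (A.val j i)))).mp h2
    have : A.val = 0 := by
      ext i j
      have := (Finset.sum_eq_zero_iff_of_nonneg
        (fun l _ => Complex.normSq_nonneg (A.val l j))).mp (hz j (Finset.mem_univ j)) i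
        (Finset.mem_univ i)
      simpa [Complex.normSq_eq_zero] using this
    exact val_injective this
  add_left A B C := by
    show (Matrix.trace ((A.val + B.val) * C.val)).re = _
    simp [add_mul, Matrix.trace_add]
  smul_left A B r := by
    show (Matrix.trace ((r • A.val) * B.val)).re = _
    simp [smul_mul_assoc, Matrix.trace_smul]

instance : NormedAddCommGroup (SA k) := (core k).toNormedAddCommGroup
instance : InnerProductSpace ℝ (SA k) := InnerProductSpace.ofCore (core k).toCore
instance : MeasurableSpace (SA k) := borel _
instance : BorelSpace (SA k) := ⟨rfl⟩
instance : FiniteDimensional ℝ (SA k) :=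
  FiniteDimensional.of_injective
    ({ toFun := SA.val, map_add' := fun _ _ => rfl,
       map_smul' := fun _ _ => rfl } : SA k →ₗ[ℝ] Mat k)
    val_injective





end SA
/-! ### Noncommutative polynomials -/

/-- Noncommutative polynomials with complex coefficients in `N` indeterminates. -/
abbrev NCPoly (N : ℕ) : Type := FreeAlgebra ℂ (Fin N)

/-- Evaluation of a noncommutative polynomial at an `N`-tuple of elements of a
unital complex algebra. -/
def NCPoly.eval {N : ℕ} {B : Type*} [Ring B] [Algebra ℂ B] (P : NCPoly N) (x : Fin N → B) : B :=
  FreeAlgebra.lift ℂ x P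

/-- The ordered product `x (w 0) * x (w 1) * ⋯ * x (w (p-1))` of the word `w`. -/
def wordProd {B : Type*} [Monoid B] {N : ℕ} (x : Fin N → B) {p : ℕ} (w : Fin p → Fin N) : B :=
  (List.ofFn fun i => x (w i)).prod

/-! ### Tracial states -/

section TracialState
variable {A : Type*} [Ring A] [Module ℂ A] [StarRing A]

/-- A tracial state on a unital complex ⋆-algebra: a linear functional `τ` with `τ 1 = 1`,
`τ (x⋆ x) ≥ 0` and `τ (x y) = τ (y x)`. -/
structure IsTracialState (τ : A →ₗ[ℂ] ℂ) : Prop where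
  map_one : τ 1 = 1
  nonneg : ∀ x : A, 0 ≤ τ (star x * x)
  mul_comm : ∀ x y : A, τ (x * y) = τ (y * x)

end TracialState

/-! ### Voiculescu's microstates free entropy and free capacity -/

section FreeEntropy
variable {A : Type*} [Ring A] [Module ℂ A] [StarRing A] {n m : ℕ}

/-- The matricial microstates `Γ_R(a₁,…,aₙ,b₁,…,bₘ; k, l, ε; τ)`: tuples of self-adjoint
`k × k` matrices of operator norm at most `R` such that the normalized trace of every word of
length between `1` and `l` differs by at most `ε` from the corresponding `τ`-moment. -/
def GammaR (R : ℝ) (a : Fin n → A) (b : Fin m → A) (τ : A →ₗ[ℂ] ℂ) (k l : ℕ) (ε : ℝ) :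
    Set ((Fin n → SA k) × (Fin m → SA k)) :=
  {CD | (∀ i, opNorm (CD.1 i).val ≤ R) ∧ (∀ j, opNorm (CD.2 j).val ≤ R) ∧
    ∀ (p : ℕ), 1 ≤ p → p ≤ l → ∀ w : Fin p → Fin (n + m),
      ‖(k : ℂ)⁻¹ *
          Matrix.trace (wordProd (Fin.append (fun i => (CD.1 i).val) fun j => (CD.2 j).val) w)
        - τ (wordProd (Fin.append a b) w)‖ ≤ ε}

/-- The microstates for `a₁,…,aₙ` in the presence of `b₁,…,bₘ`: the projection of
`Γ_R(a₁,…,aₙ,b₁,…,bₘ; k, l, ε; τ)` on the first `n` coordinates. -/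
def GammaRPres (R : ℝ) (a : Fin n → A) (b : Fin m → A) (τ : A →ₗ[ℂ] ℂ) (k l : ℕ) (ε : ℝ) :
    Set (Fin n → SA k) :=
  Prod.fst '' GammaR R a b τ k l ε

/-- Voiculescu's microstates free entropy `χ(a₁,…,aₙ : b₁,…,bₘ; τ)` of `a₁,…,aₙ` in the
presence of `b₁,…,bₘ`, with respect to the tracial state `τ`. -/
def chiPres (a : Fin n → A) (b : Fin m → A) (τ : A →ₗ[ℂ] ℂ) : EReal :=
  ⨆ (R : ℝ) (_ : 0 < R), ⨅ (l : ℕ) (ε : ℝ) (_ : 0 < ε),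
    Filter.atTop.limsup fun k : ℕ =>
      (↑(((k : ℝ) ^ 2)⁻¹) : EReal) * ENNReal.log (volume (GammaRPres R a b τ k l ε))
        + (↑((n : ℝ) / 2 * Real.log k) : EReal)

/-- Voiculescu's microstates free entropy `χ(a₁,…,aₙ; τ)`. -/
def chi (a : Fin n → A) (τ : A →ₗ[ℂ] ℂ) : EReal :=
  chiPres a (fun i : Fin 0 => i.elim0) τ

/-- The free capacity `κ(a₁,…,aₙ : b₁,…,bₘ)` of `a₁,…,aₙ` in the presence of `b₁,…,bₘ`:
the supremum of `χ(a₁,…,aₙ : b₁,…,bₘ; τ)` over all tracial states `τ` of the ambient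
algebra. -/
def kappaPres (a : Fin n → A) (b : Fin m → A) : EReal :=
  ⨆ (τ : A →ₗ[ℂ] ℂ) (_ : IsTracialState τ), chiPres a b τ

/-- The free capacity `κ(a₁,…,aₙ)`. -/
def kappa (a : Fin n → A) : EReal :=
  ⨆ (τ : A →ₗ[ℂ] ℂ) (_ : IsTracialState τ), chi a τ

end FreeEntropy

/-! ### Topological free entropy -/

section TopEntropy
variable {A : Type*} [NormedRing A] [NormedAlgebra ℂ A] [StarRing A] {n m : ℕ}

/-- The norm-microstates `Γ_top(a₁,…,aₙ,b₁,…,bₘ; k, ε, P₁,…,P_r)`: tuples of self-adjoint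
`k × k` matrices on which each of the noncommutative polynomials `P j` has operator norm
`ε`-close to its norm at `(a, b)`. -/
def GammaTop (a : Fin n → A) (b : Fin m → A) (k : ℕ) (ε : ℝ) {r : ℕ}
    (P : Fin r → NCPoly (n + m)) : Set ((Fin n → SA k) × (Fin m → SA k)) :=
  {CD | ∀ j : Fin r,
    |opNorm ((P j).eval (Fin.append (fun i => (CD.1 i).val) fun i => (CD.2 i).val))
      - ‖(P j).eval (Fin.append a b)‖| ≤ ε}

/-- Norm-microstates of `a₁,…,aₙ` in the presence of `b₁,…,bₘ`: the projection of
`Γ_top(a₁,…,aₙ,b₁,…,bₘ; k, ε, P₁,…,P_r)` on the first `n` coordinates. -/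
def GammaTopPres (a : Fin n → A) (b : Fin m → A) (k : ℕ) (ε : ℝ) {r : ℕ}
    (P : Fin r → NCPoly (n + m)) : Set (Fin n → SA k) :=
  Prod.fst '' GammaTop a b k ε P

/-- The topological free entropy `χ_top(a₁,…,aₙ : b₁,…,bₘ)` of `a₁,…,aₙ` in the presence
of `b₁,…,bₘ`. -/
def chiTopPres (a : Fin n → A) (b : Fin m → A) : EReal :=
  ⨅ (ε : ℝ) (_ : 0 < ε) (r : ℕ) (P : Fin r → NCPoly (n + m)),
    Filter.atTop.limsup fun k : ℕ =>
      (↑(((k : ℝ) ^ 2)⁻¹) : EReal) * ENNReal.log (volume (GammaTopPres a b k ε P))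
        + (↑((n : ℝ) / 2 * Real.log k) : EReal)

/-- The topological free entropy `χ_top(a₁,…,aₙ)`. -/
def chiTop (a : Fin n → A) : EReal :=
  chiTopPres a (fun i : Fin 0 => i.elim0)

end TopEntropy
/-! ### Topological free entropy dimension -/

/-- The minimal number of elements of an `ε`-net of `X` for the distance function `d`
(`⊤` if there is no finite `ε`-net). -/
def coveringNumber {α : Type*} (d : α → α → ℝ) (ε : ℝ) (X : Set α) : ℕ∞ :=
  ⨅ (S : Finset α) (_ : ∀ x ∈ X, ∃ s ∈ S, d x s ≤ ε), (S.card : ℕ∞)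

/-- The metric on `n`-tuples of `k × k` matrices given by the maximum of the operator norms
of the differences of the coordinates. -/
def opDist {n k : ℕ} (x y : Fin n → Mat k) : ℝ := ⨆ i, opNorm (x i - y i)

/-- The normalized Hilbert–Schmidt metric
`|(A₁,…,Aₙ)|₂ = k^{-1/2} (Σ_j Tr(A_j²))^{1/2}` on `n`-tuples of `k × k` matrices,
applied to differences. -/
def hsDist {n k : ℕ} (x y : Fin n → Mat k) : ℝ :=
  Real.sqrt ((k : ℝ)⁻¹ * (∑ j, Matrix.trace ((x j - y j) * (x j - y j))).re)

section TopDim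
variable {A : Type*} [NormedRing A] [NormedAlgebra ℂ A] [StarRing A] {n m : ℕ}

/-- The norm-microstates of `a₁,…,aₙ` in the presence of `b₁,…,bₘ`, viewed as a subset of
`(M_k)ⁿ`. -/
def GammaTopPresMat (a : Fin n → A) (b : Fin m → A) (k : ℕ) (ε : ℝ) {r : ℕ}
    (P : Fin r → NCPoly (n + m)) : Set (Fin n → Mat k) :=
  (fun C : Fin n → SA k => fun i => (C i).val) '' GammaTopPres a b k ε P

/-- `D_ε(a₁,…,aₙ : b₁,…,bₘ)`, computed with respect to the family of metrics `d` on tuples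
of matrices. -/
def DepsWith (d : ∀ k : ℕ, (Fin n → Mat k) → (Fin n → Mat k) → ℝ)
    (a : Fin n → A) (b : Fin m → A) (ε : ℝ) : EReal :=
  ⨅ (r : ℕ) (P : Fin r → NCPoly (n + m)),
    Filter.atTop.limsup fun k : ℕ =>
      (↑(((k : ℝ) ^ 2)⁻¹) : EReal) *
        ENNReal.log ((coveringNumber (d k) ε (GammaTopPresMat a b k ε P) : ℕ∞) : ℝ≥0∞)

/-- The topological free entropy dimension computed with respect to the family of metrics
`d` on tuples of matrices: `limsup_{ε→0⁺} D_ε / |log ε|`. -/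
def deltaTopWith (d : ∀ k : ℕ, (Fin n → Mat k) → (Fin n → Mat k) → ℝ)
    (a : Fin n → A) (b : Fin m → A) : EReal :=
  Filter.limsup (fun ε : ℝ => (↑|Real.log ε|⁻¹ : EReal) * DepsWith d a b ε)
    (nhdsWithin 0 (Set.Ioi 0))

/-- The topological free entropy dimension `δ_top(a₁,…,aₙ : b₁,…,bₘ)` (for the operator-norm
metric on tuples of matrices). -/
def deltaTopPres (a : Fin n → A) (b : Fin m → A) : EReal :=
  deltaTopWith (fun _ => opDist) a b

/-- The topological free entropy dimension `δ_top(a₁,…,aₙ)`. -/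
def deltaTop (a : Fin n → A) : EReal :=
  deltaTopPres a (fun i : Fin 0 => i.elim0)

/-! ### Semi-microstates -/

/-- The norm-semi-microstates `Γ_top½(a₁,…,aₙ,b₁,…,bₘ; k, ε, P₁,…,P_r)`: only the one-sided
inequalities `‖P_j(C,D)‖ ≤ ‖P_j(a,b)‖ + ε` are required. -/
def GammaTopHalf (a : Fin n → A) (b : Fin m → A) (k : ℕ) (ε : ℝ) {r : ℕ}
    (P : Fin r → NCPoly (n + m)) : Set ((Fin n → SA k) × (Fin m → SA k)) :=
  {CD | ∀ j : Fin r,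
    opNorm ((P j).eval (Fin.append (fun i => (CD.1 i).val) fun i => (CD.2 i).val))
      ≤ ‖(P j).eval (Fin.append a b)‖ + ε}

/-- Norm-semi-microstates of `a₁,…,aₙ` in the presence of `b₁,…,bₘ`. -/
def GammaTopHalfPres (a : Fin n → A) (b : Fin m → A) (k : ℕ) (ε : ℝ) {r : ℕ}
    (P : Fin r → NCPoly (n + m)) : Set (Fin n → SA k) :=
  Prod.fst '' GammaTopHalf a b k ε P

/-- The topological free entropy `χ_top½(a₁,…,aₙ : b₁,…,bₘ)` defined via
norm-semi-microstates. -/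
def chiTopHalfPres (a : Fin n → A) (b : Fin m → A) : EReal :=
  ⨅ (ε : ℝ) (_ : 0 < ε) (r : ℕ) (P : Fin r → NCPoly (n + m)),
    Filter.atTop.limsup fun k : ℕ =>
      (↑(((k : ℝ) ^ 2)⁻¹) : EReal) * ENNReal.log (volume (GammaTopHalfPres a b k ε P))
        + (↑((n : ℝ) / 2 * Real.log k) : EReal)

end TopDim
/-!
Splitting a norm-microstate of `(a, b)` into its two blocks lands in the product of a
microstate of `a` in the presence of `b` and one of `b` in the presence of `a`, provided the
polynomial family used for `(a, b)` contains both families, those for `(b, a)` with their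
variables swapped. Volumes of products multiply, so the normalized log-volumes add, and the
`limsup` of a sum is at most the sum of the `limsup`s.

To add the two conditional entropies in `EReal` they must be `< ⊤`. The coordinate
polynomials `Xᵢ` confine the microstates of `a` to a product of Hilbert–Schmidt balls of radius
`√k (‖aᵢ‖ + ε)` in a space of dimension `k²`, and comparing with the Gaussian `exp (-k ‖x‖² / R²)`
bounds their volume by `exp (k²) (π R² / k) ^ (k² / 2)`.

The second inequality is monotonicity: dropping the constraints that involve the other tuple
only enlarges the projected microstate sets.
-/

namespace NCPoly

def relabel {N M : ℕ} (σ : Fin N → Fin M) : NCPoly N →ₐ[ℂ] NCPoly M :=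
  FreeAlgebra.lift ℂ (FreeAlgebra.ι ℂ ∘ σ)

variable {N M : ℕ} {B : Type*} [Ring B] [Algebra ℂ B]

@[simp]
lemma eval_ι (x : Fin N → B) (i : Fin N) : NCPoly.eval (FreeAlgebra.ι ℂ i) x = x i :=
  FreeAlgebra.lift_ι_apply x i

@[simp]
lemma eval_relabel (σ : Fin N → Fin M) (P : NCPoly N) (x : Fin M → B) :
    (relabel σ P).eval x = P.eval (x ∘ σ) := by
  show (FreeAlgebra.lift ℂ x).comp (relabel σ) P = FreeAlgebra.lift ℂ (x ∘ σ) P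
  congr 1
  ext i
  simp [relabel]

end NCPoly

lemma Fin.append_of_fin_zero {α : Type*} {n : ℕ} (u : Fin n → α) (v : Fin 0 → α) :
    Fin.append u v = u :=
  Fin.append_right_nil u v rfl

lemma Fin.comp_finAddFlip {α : Type*} {n m : ℕ} (f : Fin (n + m) → α) :
    f ∘ finAddFlip = Fin.append (f ∘ Fin.natAdd n) (f ∘ Fin.castAdd m) := by
  ext i
  induction i using Fin.addCases <;> simp

lemma two_mul_finrank_selfAdjoint (E : Type*) [AddCommGroup E] [Module ℂ E] [StarAddMonoid E]
    [StarModule ℂ E] [FiniteDimensional ℂ E] :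
    2 * Module.finrank ℝ (selfAdjoint E) = Module.finrank ℝ E := by
  have : FiniteDimensional ℝ E := Module.Finite.trans ℂ E
  have : FiniteDimensional ℝ (selfAdjoint E) :=
    Module.Finite.of_surjective realPart realPart_surjective
  let e : E ≃ₗ[ℝ] selfAdjoint E × selfAdjoint E :=
    LinearEquiv.ofBijective (realPart.prod imaginaryPart)
      ⟨fun x y h => ComplexStarModule.ext (congrArg Prod.fst h) (congrArg Prod.snd h),
        fun p => ⟨(p.1 : E) + Complex.I • (p.2 : E), by
          ext <;> simp [realPart_I_smul, imaginaryPart_I_smul]⟩⟩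
  rw [e.finrank_eq, Module.finrank_prod, two_mul]

/-- Chebyshev's inequality for the Gaussian `exp (-b ‖v‖²)`, whose integral is
`(π / b) ^ (d / 2)`. -/
theorem volume_closedBall_le_exp_mul_rpow {V : Type*} [NormedAddCommGroup V]
    [InnerProductSpace ℝ V] [FiniteDimensional ℝ V] [MeasurableSpace V] [BorelSpace V]
    {b : ℝ} (hb : 0 < b) (r : ℝ) :
    volume (Metric.closedBall (0 : V) r)
      ≤ ENNReal.ofReal
          (Real.exp (b * r ^ 2) * (Real.pi / b) ^ (Module.finrank ℝ V / 2 : ℝ)) := by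
  set g : V → ℝ := fun v => Real.exp (-b * ‖v‖ ^ 2)
  set c : ℝ := Real.exp (-b * r ^ 2)
  have hg : ∫ v, g v = (Real.pi / b) ^ (Module.finrank ℝ V / 2 : ℝ) :=
    GaussianFourier.integral_rexp_neg_mul_sq_norm hb
  have hg_int : Integrable g := Integrable.of_integral_ne_zero (by rw [hg]; positivity)
  have hball : Metric.closedBall (0 : V) r ⊆ {v | ENNReal.ofReal c ≤ ENNReal.ofReal (g v)} := by
    intro v hv
    rw [mem_closedBall_zero_iff] at hv
    exact ENNReal.ofReal_le_ofReal <| Real.exp_le_exp.2 <|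
      mul_le_mul_of_nonpos_left (pow_le_pow_left₀ (norm_nonneg v) hv 2) (neg_nonpos.2 hb.le)
  have hmarkov : ENNReal.ofReal c * volume (Metric.closedBall (0 : V) r)
      ≤ ENNReal.ofReal (∫ v, g v) := calc
    _ ≤ ENNReal.ofReal c * volume {v | ENNReal.ofReal c ≤ ENNReal.ofReal (g v)} := by
      gcongr
    _ ≤ ∫⁻ v, ENNReal.ofReal (g v) :=
      mul_meas_ge_le_lintegral₀ hg_int.aemeasurable.ennreal_ofReal _
    _ = ENNReal.ofReal (∫ v, g v) :=
      (ofReal_integral_eq_lintegral_ofReal hg_int (ae_of_all _ fun v => (Real.exp_pos _).le)).symm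
  have hc : ENNReal.ofReal (Real.exp (b * r ^ 2)) * ENNReal.ofReal c = 1 := by
    rw [← ENNReal.ofReal_mul (Real.exp_pos _).le, ← Real.exp_add]
    simp
  calc volume (Metric.closedBall (0 : V) r)
      = ENNReal.ofReal (Real.exp (b * r ^ 2)) *
          (ENNReal.ofReal c * volume (Metric.closedBall (0 : V) r)) := by
        rw [← mul_assoc, hc, one_mul]
    _ ≤ ENNReal.ofReal (Real.exp (b * r ^ 2)) * ENNReal.ofReal (∫ v, g v) := by gcongr
    _ = _ := by rw [hg, ← ENNReal.ofReal_mul (Real.exp_pos _).le]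

lemma opNorm_nonneg {k : ℕ} (M : Mat k) : 0 ≤ opNorm M := norm_nonneg _

lemma sum_normSq_col_le_opNorm_sq {k : ℕ} (M : Mat k) (j : Fin k) :
    ∑ i, Complex.normSq (M i j) ≤ opNorm M ^ 2 := by
  have hcol : ‖Matrix.toEuclideanCLM (𝕜 := ℂ) M (EuclideanSpace.single j 1)‖ ^ 2
      = ∑ i, Complex.normSq (M i j) := by
    simp [EuclideanSpace.norm_sq_eq, Complex.sq_norm]
  have hle := (Matrix.toEuclideanCLM (𝕜 := ℂ) M).le_opNorm (EuclideanSpace.single j 1)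
  rw [← hcol]
  exact pow_le_pow_left₀ (norm_nonneg _) (by simpa [opNorm] using hle) 2

namespace SA
variable {k : ℕ}

def toSelfAdjoint (k : ℕ) : SA k ≃ₗ[ℝ] selfAdjoint (Mat k) where
  toFun A := ⟨A.val, A.isSA⟩
  invFun A := ⟨A.1, A.2⟩
  map_add' _ _ := rfl
  map_smul' _ _ := rfl

lemma finrank_eq (k : ℕ) : Module.finrank ℝ (SA k) = k ^ 2 := by
  have h := two_mul_finrank_selfAdjoint (Mat k)
  rw [← (toSelfAdjoint k).finrank_eq, Module.finrank_matrix, Complex.finrank_real_complex,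
    Fintype.card_fin] at h
  nlinarith

lemma norm_le_sqrt_mul_opNorm (A : SA k) : ‖A‖ ≤ √k * opNorm A.val := by
  have hsq : ‖A‖ ^ 2 ≤ k * opNorm A.val ^ 2 := calc
    ‖A‖ ^ 2 = ∑ i, ∑ j, Complex.normSq (A.val j i) := by
      rw [← real_inner_self_eq_norm_sq]
      exact congrArg Complex.re (trace_sq A)
    _ ≤ ∑ _i : Fin k, opNorm A.val ^ 2 :=
      Finset.sum_le_sum fun i _ => sum_normSq_col_le_opNorm_sq A.val i
    _ = k * opNorm A.val ^ 2 := by simp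
  calc ‖A‖ = √(‖A‖ ^ 2) := (Real.sqrt_sq (norm_nonneg A)).symm
    _ ≤ √(k * opNorm A.val ^ 2) := Real.sqrt_le_sqrt hsq
    _ = √k * opNorm A.val := by
      rw [Real.sqrt_mul (Nat.cast_nonneg k), Real.sqrt_sq (opNorm_nonneg _)]

/-- The Gaussian bound with `b = k / R²`. -/
lemma log_volume_closedBall_le (hk : 0 < k) {R : ℝ} (hR : 0 < R) :
    ENNReal.log (volume (Metric.closedBall (0 : SA k) (√k * R)))
      ≤ (((k : ℝ) ^ 2 * (1 + Real.log (Real.pi * R ^ 2 / k) / 2) : ℝ) : EReal) := by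
  have hk' : (0 : ℝ) < k := Nat.cast_pos.2 hk
  have hvol := volume_closedBall_le_exp_mul_rpow (V := SA k) (b := k / R ^ 2) (by positivity)
    (√k * R)
  have hb : (k : ℝ) / R ^ 2 * (√k * R) ^ 2 = (k : ℝ) ^ 2 := by
    rw [mul_pow, Real.sq_sqrt hk'.le]
    field_simp
  have hπ : Real.pi / ((k : ℝ) / R ^ 2) = Real.pi * R ^ 2 / k := by field_simp
  rw [hb, hπ, finrank_eq] at hvol
  refine (ENNReal.log_monotone hvol).trans (le_of_eq ?_)
  rw [ENNReal.log_ofReal_of_pos (by positivity)]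
  congr 1
  rw [Real.log_mul (by positivity) (by positivity), Real.log_exp, Real.log_rpow (by positivity)]
  push_cast
  ring

end SA

section Split
variable {n m k : ℕ}

lemma measurePreserving_split :
    MeasurePreserving (fun C : Fin (n + m) → SA k => (C ∘ Fin.castAdd m, C ∘ Fin.natAdd n)) :=
  (volume_measurePreserving_sumPiEquivProdPi (fun _ : Fin n ⊕ Fin m => SA k)).comp
    (volume_measurePreserving_piCongrLeft (fun _ : Fin (n + m) => SA k) finSumFinEquiv).symm

lemma volume_le_mul_of_subset_split {W : Set (Fin (n + m) → SA k)} {S : Set (Fin n → SA k)}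
    {T : Set (Fin m → SA k)}
    (h : W ⊆ (fun C => (C ∘ Fin.castAdd m, C ∘ Fin.natAdd n)) ⁻¹' (S ×ˢ T)) :
    volume W ≤ volume S * volume T :=
  (measure_mono h).trans <| (measurePreserving_split.measure_preimage_le _).trans_eq <|
    Measure.prod_prod S T

end Split

/-- The term under the `limsup` in the definition of `chiTopPres`. -/
def volEntropy {n k : ℕ} (S : Set (Fin n → SA k)) : EReal :=
  (↑(((k : ℝ) ^ 2)⁻¹) : EReal) * ENNReal.log (volume S)
    + (↑((n : ℝ) / 2 * Real.log k) : EReal)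

section VolEntropy
variable {n m k : ℕ}

lemma volEntropy_mono {S T : Set (Fin n → SA k)} (h : S ⊆ T) :
    volEntropy S ≤ volEntropy T := by
  unfold volEntropy
  gcongr

lemma volEntropy_le_add {W : Set (Fin (n + m) → SA k)} {S : Set (Fin n → SA k)}
    {T : Set (Fin m → SA k)} (h : volume W ≤ volume S * volume T) :
    volEntropy W ≤ volEntropy S + volEntropy T := by
  have hc : (0 : EReal) ≤ ↑(((k : ℝ) ^ 2)⁻¹) := EReal.coe_nonneg.2 (by positivity)
  have hlog : ENNReal.log (volume W) ≤ ENNReal.log (volume S) + ENNReal.log (volume T) :=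
    ENNReal.log_mul_add ▸ ENNReal.log_monotone h
  have hconst : (↑(((n + m : ℕ) : ℝ) / 2 * Real.log k) : EReal)
      = ↑((n : ℝ) / 2 * Real.log k) + ↑((m : ℝ) / 2 * Real.log k) := by
    rw [← EReal.coe_add]
    congr 1
    push_cast
    ring
  unfold volEntropy
  rw [hconst, add_add_add_comm, ← EReal.left_distrib_of_nonneg_of_ne_top hc (EReal.coe_ne_top _)]
  gcongr

lemma volEntropy_le_of_subset_pi_closedBall (hk : 0 < k) {R : ℝ} (hR : 0 < R)
    {S : Set (Fin n → SA k)} (hS : S ⊆ Set.univ.pi fun _ => Metric.closedBall 0 (√k * R)) :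
    volEntropy S ≤ ((n * (1 + Real.log (Real.pi * R ^ 2) / 2) : ℝ) : EReal) := by
  have hlog : ENNReal.log (volume S)
      ≤ ((n * ((k : ℝ) ^ 2 * (1 + Real.log (Real.pi * R ^ 2 / k) / 2)) : ℝ) : EReal) := calc
    _ ≤ ENNReal.log (volume (Metric.closedBall (0 : SA k) (√k * R)) ^ n) := by
      refine ENNReal.log_monotone ((measure_mono hS).trans_eq ?_)
      simp [volume_pi_pi]
    _ ≤ n * (((k : ℝ) ^ 2 * (1 + Real.log (Real.pi * R ^ 2 / k) / 2) : ℝ) : EReal) := by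
      rw [ENNReal.log_pow]
      exact mul_le_mul_of_nonneg_left (SA.log_volume_closedBall_le hk hR) (by positivity)
    _ = _ := by
      rw [EReal.coe_mul]
      rfl
  unfold volEntropy
  calc
    _ ≤ (↑(((k : ℝ) ^ 2)⁻¹) : EReal) *
        ((n * ((k : ℝ) ^ 2 * (1 + Real.log (Real.pi * R ^ 2 / k) / 2)) : ℝ) : EReal)
        + ↑((n : ℝ) / 2 * Real.log k) := by
      gcongr
    _ = _ := by
      rw [← EReal.coe_mul, ← EReal.coe_add, Real.log_div (by positivity) (by positivity)]
      congr 1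
      field_simp
      ring

end VolEntropy

section Microstates
variable {A : Type*} [NormedRing A] [NormedAlgebra ℂ A] {n m : ℕ}

lemma chiTopPres_le (a : Fin n → A) (b : Fin m → A) {ε : ℝ} (hε : 0 < ε) {r : ℕ}
    (P : Fin r → NCPoly (n + m)) :
    chiTopPres a b ≤ atTop.limsup fun k => volEntropy (GammaTopPres a b k ε P) :=
  iInf_le_of_le ε <| iInf_le_of_le hε <| iInf_le_of_le r <| iInf_le _ P

lemma exists_limsup_lt_of_chiTopPres_lt {a : Fin n → A} {b : Fin m → A} {c : EReal}
    (h : chiTopPres a b < c) :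
    ∃ ε > 0, ∃ r, ∃ P : Fin r → NCPoly (n + m),
      atTop.limsup (fun k => volEntropy (GammaTopPres a b k ε P)) < c := by
  simp only [chiTopPres, iInf_lt_iff, exists_prop] at h
  exact h

lemma gammaTopPres_mono (a : Fin n → A) (b : Fin m → A) (k : ℕ) {ε ε' : ℝ} (h : ε ≤ ε')
    {r : ℕ} (P : Fin r → NCPoly (n + m)) :
    GammaTopPres a b k ε P ⊆ GammaTopPres a b k ε' P :=
  Set.image_mono fun _ hCD j => (hCD j).trans h

lemma gammaTopPres_relabel_castAdd_subset (a : Fin n → A) (b : Fin m → A) (k : ℕ) (ε : ℝ)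
    {r : ℕ} (P : Fin r → NCPoly (n + 0)) :
    GammaTopPres a b k ε (fun j => NCPoly.relabel (Fin.castAdd m) (P j))
      ⊆ GammaTopPres a (fun i : Fin 0 => i.elim0) k ε P := by
  rintro _ ⟨⟨C, D⟩, hCD, rfl⟩
  refine ⟨(C, fun i => i.elim0), fun j => ?_, rfl⟩
  simpa [Function.comp_def, Fin.append_of_fin_zero] using hCD j

/-- The family `P` in the variables of `(a, b)` followed by the family `Q` in the variables of
`(b, a)`, the latter rewritten in the variables of `(a, b)`. -/
def appendFlip {r s : ℕ} (P : Fin r → NCPoly (n + m)) (Q : Fin s → NCPoly (m + n)) :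
    Fin (r + s) → NCPoly (n + m) :=
  Fin.append P fun j => NCPoly.relabel finAddFlip (Q j)

lemma gammaTopPres_appendFlip_subset (a : Fin n → A) (b : Fin m → A) (k : ℕ) (ε : ℝ)
    {r s : ℕ} (P : Fin r → NCPoly (n + m)) (Q : Fin s → NCPoly (m + n)) :
    GammaTopPres (Fin.append a b) (fun i : Fin 0 => i.elim0) k ε
        (appendFlip P Q : Fin (r + s) → NCPoly (n + m))
      ⊆ (fun C => (C ∘ Fin.castAdd m, C ∘ Fin.natAdd n)) ⁻¹'
          (GammaTopPres a b k ε P ×ˢ GammaTopPres b a k ε Q) := by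
  rintro _ ⟨⟨C, D⟩, hCD, rfl⟩
  refine ⟨⟨(C ∘ Fin.castAdd m, C ∘ Fin.natAdd n), fun j => ?_, rfl⟩,
    ⟨(C ∘ Fin.natAdd n, C ∘ Fin.castAdd m), fun j => ?_, rfl⟩⟩
  · simpa [appendFlip, Fin.append_of_fin_zero, Fin.append_castAdd_natAdd (f := fun i => (C i).val)]
      using hCD (Fin.castAdd s j)
  · have h := hCD (Fin.natAdd r j)
    simp only [appendFlip, Fin.append_right, NCPoly.eval_relabel, Fin.append_of_fin_zero,
      Fin.comp_finAddFlip] at h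
    simpa [Function.comp_def] using h

def firstCoords (n m : ℕ) : Fin n → NCPoly (n + m) :=
  fun i => FreeAlgebra.ι ℂ (Fin.castAdd m i)

lemma gammaTopPres_firstCoords_subset (a : Fin n → A) (b : Fin m → A) (k : ℕ) {ε R : ℝ}
    (hR : ∀ i, ‖a i‖ + ε ≤ R) :
    GammaTopPres a b k ε (firstCoords n m)
      ⊆ Set.univ.pi fun _ => Metric.closedBall 0 (√k * R) := by
  rintro _ ⟨⟨C, D⟩, hCD, rfl⟩ i -
  have h := hCD i
  simp only [firstCoords, NCPoly.eval_ι, Fin.append_left] at h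
  rw [mem_closedBall_zero_iff]
  calc ‖C i‖ ≤ √k * opNorm (C i).val := SA.norm_le_sqrt_mul_opNorm _
    _ ≤ √k * R := by gcongr; linarith [(abs_le.1 h).2, hR i]

end Microstates

section Entropy
variable {A : Type*} [NormedRing A] [NormedAlgebra ℂ A] {n m : ℕ}

lemma chiTopPres_lt_top (a : Fin n → A) (b : Fin m → A) : chiTopPres a b < ⊤ := by
  set R := ∑ i, ‖a i‖ + 1
  have hR : ∀ i, ‖a i‖ + 1 ≤ R := fun i =>
    add_le_add_left (Finset.single_le_sum (fun j _ => norm_nonneg (a j)) (Finset.mem_univ i)) 1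
  calc chiTopPres a b
      ≤ atTop.limsup fun k => volEntropy (GammaTopPres a b k 1 (firstCoords n m)) :=
        chiTopPres_le a b one_pos _
    _ ≤ ((n * (1 + Real.log (Real.pi * R ^ 2) / 2) : ℝ) : EReal) := by
        refine Filter.limsup_le_of_le (by isBoundedDefault) ?_
        filter_upwards [eventually_gt_atTop 0] with k hk
        exact volEntropy_le_of_subset_pi_closedBall hk (by positivity)
          (gammaTopPres_firstCoords_subset a b k hR)
    _ < ⊤ := EReal.coe_lt_top _

theorem chiTopPres_le_chiTop (a : Fin n → A) (b : Fin m → A) : chiTopPres a b ≤ chiTop a :=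
  le_iInf₂ fun ε hε => le_iInf₂ fun _ P => (chiTopPres_le a b hε _).trans <|
    limsup_le_limsup <| Eventually.of_forall fun k =>
      volEntropy_mono (gammaTopPres_relabel_castAdd_subset a b k ε P)

theorem chiTop_append_le (a : Fin n → A) (b : Fin m → A) :
    chiTop (Fin.append a b) ≤ chiTopPres a b + chiTopPres b a := by
  refine EReal.le_add_of_forall_gt (.inr (chiTopPres_lt_top b a).ne)
    (.inl (chiTopPres_lt_top a b).ne) fun c hc d hd => ?_
  obtain ⟨ε₁, hε₁, r, P, hP⟩ := exists_limsup_lt_of_chiTopPres_lt hc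
  obtain ⟨ε₂, hε₂, s, Q, hQ⟩ := exists_limsup_lt_of_chiTopPres_lt hd
  have hsplit : ∀ k, volEntropy (GammaTopPres (Fin.append a b) (fun i : Fin 0 => i.elim0) k
      (min ε₁ ε₂) (appendFlip P Q : Fin (r + s) → NCPoly (n + m)))
      ≤ volEntropy (GammaTopPres a b k ε₁ P) + volEntropy (GammaTopPres b a k ε₂ Q) :=
    fun k => volEntropy_le_add <| volume_le_mul_of_subset_split <|
      (gammaTopPres_appendFlip_subset a b k _ P Q).trans <| Set.preimage_mono <|
        Set.prod_mono (gammaTopPres_mono a b k (min_le_left _ _) P)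
          (gammaTopPres_mono b a k (min_le_right _ _) Q)
  calc chiTop (Fin.append a b)
      ≤ atTop.limsup fun k => volEntropy (GammaTopPres (Fin.append a b)
          (fun i : Fin 0 => i.elim0) k (min ε₁ ε₂)
          (appendFlip P Q : Fin (r + s) → NCPoly (n + m))) :=
        chiTopPres_le _ _ (lt_min hε₁ hε₂) _
    _ ≤ atTop.limsup fun k =>
          volEntropy (GammaTopPres a b k ε₁ P) + volEntropy (GammaTopPres b a k ε₂ Q) :=
        limsup_le_limsup (Eventually.of_forall hsplit)
    _ ≤ c + d := EReal.limsup_add_le_of_le hP hQ.le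

end Entropy

theorem chiTop_subadditive_general {A : Type*} [NormedRing A] [NormedAlgebra ℂ A] {n m : ℕ}
    (a : Fin n → A) (b : Fin m → A) :
    chiTop (Fin.append a b) ≤ chiTopPres a b + chiTopPres b a ∧
    chiTopPres a b + chiTopPres b a ≤ chiTop a + chiTop b :=
  ⟨chiTop_append_le a b, add_le_add (chiTopPres_le_chiTop a b) (chiTopPres_le_chiTop b a)⟩

/-- Subadditivity of the topological free entropy. -/
theorem chiTop_subadditive {A : Type*} [NormedRing A] [NormedAlgebra ℂ A] [StarRing A]
    [CStarRing A] [CompleteSpace A] [StarModule ℂ A] {n m : ℕ}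
    (a : Fin n → A) (b : Fin m → A)
    (ha : ∀ i, IsSelfAdjoint (a i)) (hb : ∀ j, IsSelfAdjoint (b j)) :
    chiTop (Fin.append a b) ≤ chiTopPres a b + chiTopPres b a ∧
    chiTopPres a b + chiTopPres b a ≤ chiTop a + chiTop b :=
  chiTop_subadditive_general a b
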